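/- Let d ≥ 3 be an integer, let V : ℝ^d → [0,∞) be Hölder continuous with compact support and ∫_{ℝ^d} V(x) dx = 1, and let a > 0. If w₁ and w₂ are twice continuously differentiable functions on ℝ^d satisfying Δw_i(x) = a V(x)(1 + w_i(x)) for all x ∈ ℝ^d and w_i(x) → 0 as |x| → ∞, for i = 1,2, then w₁ = w₂. -/

import Mathlib

/-!
The difference `u = w₁ - w₂` solves `Δu = a V u`, so `Δ(u²) = 2 a V u² + 2 |∇u|² ≥ 0`: the
function `u²` is subharmonic and vanishes at infinity. By the weak maximum principle, applied to
the strictly subharmonic perturbations `u² + δ |x|²` on large balls, `u² ≤ 0`, hence `u = 0`.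
-/

open MeasureTheory Filter

/-- The Laplacian of `f : ℝ^d → ℝ`, as the sum of the second partial derivatives. -/
noncomputable def lap {d : ℕ} (f : EuclideanSpace ℝ (Fin d) → ℝ)
    (x : EuclideanSpace ℝ (Fin d)) : ℝ :=
  ∑ i : Fin d, fderiv ℝ (fun y => fderiv ℝ f y (EuclideanSpace.single i 1)) x
    (EuclideanSpace.single i 1)

open Topology

theorem IsLocalMax.deriv_deriv_nonpos {φ : ℝ → ℝ} {t : ℝ} (h : IsLocalMax φ t)
    (hc : ContinuousAt φ t) : deriv (deriv φ) t ≤ 0 := by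
  by_contra! hpos
  -- the second-derivative test makes `t` a local minimum too, so `φ` is locally constant
  have hmin := isLocalMin_of_deriv_deriv_pos hpos h.deriv_eq_zero hc
  have hconst : φ =ᶠ[𝓝 t] fun _ => φ t :=
    (hmin.and h).mono fun s hs => le_antisymm hs.2 hs.1
  have hderiv : deriv φ =ᶠ[𝓝 t] fun _ => 0 :=
    hconst.eventuallyEq_nhds.mono fun s hs => by rw [hs.deriv_eq, deriv_const]
  rw [hderiv.deriv_eq, deriv_const] at hpos
  exact hpos.false

section SecondDirectionalDerivative

variable {E : Type*} [NormedAddCommGroup E] [NormedSpace ℝ E] {f g : E → ℝ}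

theorem hasFDerivAt_fderiv_apply (hf : ContDiff ℝ 2 f) (v x : E) :
    HasFDerivAt (fun y => fderiv ℝ f y v) ((fderiv ℝ (fderiv ℝ f) x).flip v) x := by
  have h := ((hf.fderiv_right (by norm_num)).differentiable one_ne_zero x).hasFDerivAt
  simpa using h.clm_apply (hasFDerivAt_const v x)

theorem fderiv_fderiv_apply_nonpos_of_isLocalMax (hf : ContDiff ℝ 2 f) {p : E}
    (hp : IsLocalMax f p) (v : E) : fderiv ℝ (fun y => fderiv ℝ f y v) p v ≤ 0 := by
  have hline : ∀ t : ℝ, HasDerivAt (fun t : ℝ => p + t • v) v t := fun t => by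
    simpa using ((hasDerivAt_id t).smul_const v).const_add p
  have hderiv : deriv (fun t : ℝ => f (p + t • v)) = fun t => fderiv ℝ f (p + t • v) v :=
    funext fun t =>
      ((hf.differentiable two_ne_zero _).hasFDerivAt.comp_hasDerivAt t (hline t)).deriv
  have hderiv2 : deriv (deriv fun t : ℝ => f (p + t • v)) 0 =
      fderiv ℝ (fun y => fderiv ℝ f y v) p v := by
    have h := (hasFDerivAt_fderiv_apply hf v p).differentiableAt.hasFDerivAt
    rw [hderiv]
    exact (h.comp_hasDerivAt_of_eq 0 (hline 0) (by simp)).deriv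
  have hmax : IsLocalMax (fun t : ℝ => f (p + t • v)) 0 :=
    IsLocalMax.comp_continuous (g := fun t : ℝ => p + t • v) (by simpa using hp)
      (hline 0).continuousAt
  rw [← hderiv2]
  exact hmax.deriv_deriv_nonpos (hf.continuous.comp (by fun_prop)).continuousAt

theorem fderiv_fderiv_apply_add (hf : ContDiff ℝ 2 f) (hg : ContDiff ℝ 2 g) (v x : E) :
    fderiv ℝ (fun y => fderiv ℝ (fun z => f z + g z) y v) x v =
      fderiv ℝ (fun y => fderiv ℝ f y v) x v + fderiv ℝ (fun y => fderiv ℝ g y v) x v := by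
  have hfg : (fun y => fderiv ℝ (fun z => f z + g z) y v) =
      fun y => fderiv ℝ f y v + fderiv ℝ g y v := funext fun y => by
    rw [fderiv_fun_add (hf.differentiable two_ne_zero y) (hg.differentiable two_ne_zero y)]
    rfl
  rw [hfg, fderiv_fun_add (hasFDerivAt_fderiv_apply hf v x).differentiableAt
    (hasFDerivAt_fderiv_apply hg v x).differentiableAt]
  rfl

theorem fderiv_fderiv_apply_mul_self (hf : ContDiff ℝ 2 f) (v x : E) :
    fderiv ℝ (fun y => fderiv ℝ (fun z => f z * f z) y v) x v =
      2 * f x * fderiv ℝ (fun y => fderiv ℝ f y v) x v + 2 * fderiv ℝ f x v ^ 2 := by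
  have hdf : ∀ y, DifferentiableAt ℝ f y := hf.differentiable two_ne_zero
  have hff : (fun y => fderiv ℝ (fun z => f z * f z) y v) =
      fun y => 2 * (f y * fderiv ℝ f y v) := funext fun y => by
    rw [fderiv_fun_mul (hdf y) (hdf y)]
    simp only [add_apply, smul_apply, smul_eq_mul]
    ring
  have hD := (hasFDerivAt_fderiv_apply hf v x).differentiableAt.hasFDerivAt
  rw [hff, (((hdf x).hasFDerivAt.fun_mul hD).const_mul 2).fderiv]
  simp only [smul_apply, add_apply, smul_eq_mul]
  ring

end SecondDirectionalDerivative

theorem fderiv_fderiv_apply_const_mul_norm_sq {F : Type*} [NormedAddCommGroup F]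
    [InnerProductSpace ℝ F] (c : ℝ) (v x : F) :
    fderiv ℝ (fun y => fderiv ℝ (fun z => c * ‖z‖ ^ 2) y v) x v = 2 * c * ‖v‖ ^ 2 := by
  have h : (fun y => fderiv ℝ (fun z => c * ‖z‖ ^ 2) y v) = fun y => (2 * c) * innerSL ℝ v y :=
    funext fun y => by
      rw [fderiv_const_mul ((contDiff_norm_sq ℝ).differentiable two_ne_zero y),
        fderiv_norm_sq_apply]
      simp only [smul_apply, innerSL_apply_apply, smul_eq_mul, nsmul_eq_mul, real_inner_comm]
      ring
  rw [h, ((innerSL ℝ v).hasFDerivAt.const_mul (2 * c)).fderiv]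
  simp

section Laplacian

variable {d : ℕ} {f g : EuclideanSpace ℝ (Fin d) → ℝ}

theorem lap_add (hf : ContDiff ℝ 2 f) (hg : ContDiff ℝ 2 g) (x : EuclideanSpace ℝ (Fin d)) :
    lap (fun y => f y + g y) x = lap f x + lap g x := by
  simp only [lap, fderiv_fderiv_apply_add hf hg, Finset.sum_add_distrib]

theorem lap_sub (hf : ContDiff ℝ 2 f) (hg : ContDiff ℝ 2 g) (x : EuclideanSpace ℝ (Fin d)) :
    lap (fun y => f y - g y) x = lap f x - lap g x := by
  have h := lap_add (hf.sub hg) hg x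
  simp only [sub_add_cancel] at h
  linarith

theorem lap_mul_self (hf : ContDiff ℝ 2 f) (x : EuclideanSpace ℝ (Fin d)) :
    lap (fun y => f y * f y) x =
      2 * f x * lap f x + 2 * ∑ i, fderiv ℝ f x (EuclideanSpace.single i 1) ^ 2 := by
  simp only [lap, fderiv_fderiv_apply_mul_self hf, Finset.sum_add_distrib, Finset.mul_sum]

theorem lap_const_mul_norm_sq (c : ℝ) (x : EuclideanSpace ℝ (Fin d)) :
    lap (fun y => c * ‖y‖ ^ 2) x = 2 * c * d := by
  simp only [lap, fderiv_fderiv_apply_const_mul_norm_sq, PiLp.norm_single, norm_one, one_pow,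
    mul_one, Finset.sum_const, Finset.card_univ, Fintype.card_fin, nsmul_eq_mul]
  ring

theorem lap_nonpos_of_isLocalMax (hf : ContDiff ℝ 2 f) {p : EuclideanSpace ℝ (Fin d)}
    (hp : IsLocalMax f p) : lap f p ≤ 0 :=
  Finset.sum_nonpos fun _ _ => fderiv_fderiv_apply_nonpos_of_isLocalMax hf hp _

theorem exists_norm_eq_le_of_lap_pos (hf : ContDiff ℝ 2 f) (hlap : ∀ x, 0 < lap f x) {R : ℝ}
    {x : EuclideanSpace ℝ (Fin d)} (hx : ‖x‖ ≤ R) : ∃ p, ‖p‖ = R ∧ f x ≤ f p := by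
  have hxR : x ∈ Metric.closedBall 0 R := mem_closedBall_zero_iff.mpr hx
  obtain ⟨p, hpR, hpmax⟩ :=
    (isCompact_closedBall 0 R).exists_isMaxOn ⟨x, hxR⟩ hf.continuous.continuousOn
  refine ⟨p, (mem_closedBall_zero_iff.mp hpR).eq_of_not_lt fun hlt => ?_, hpmax hxR⟩
  have hloc : IsLocalMax f p := hpmax.isLocalMax <|
    Metric.closedBall_mem_nhds_of_mem (mem_ball_zero_iff.mpr hlt)
  exact (hlap p).not_ge (lap_nonpos_of_isLocalMax hf hloc)

theorem nonpos_of_lap_nonneg (hd : 0 < d) (hf : ContDiff ℝ 2 f) (hlap : ∀ x, 0 ≤ lap f x)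
    (hlim : Tendsto f (cocompact (EuclideanSpace ℝ (Fin d))) (𝓝 0))
    (x : EuclideanSpace ℝ (Fin d)) : f x ≤ 0 := by
  refine le_of_forall_pos_le_add fun ε hε => ?_
  obtain ⟨R, hxR, hfR⟩ : ∃ R, ‖x‖ < R ∧ ∀ y : EuclideanSpace ℝ (Fin d), ‖y‖ = R → f y < ε := by
    rw [← Metric.cobounded_eq_cocompact, ← comap_norm_atTop] at hlim
    obtain ⟨R, hR⟩ :=
      eventually_atTop.mp (eventually_comap.mp (hlim.eventually (eventually_lt_nhds hε)))
    exact ⟨max R ‖x‖ + 1, by grind, fun y hy => hR _ (by grind) y hy⟩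
  have hR : 0 < R := (norm_nonneg x).trans_lt hxR
  have hδ : ∀ δ > 0, f x ≤ ε + δ * R ^ 2 := fun δ hδ => by
    have hq : ContDiff ℝ 2 fun y : EuclideanSpace ℝ (Fin d) => δ * ‖y‖ ^ 2 :=
      contDiff_const.mul (contDiff_norm_sq ℝ)
    have hlap' : ∀ y, 0 < lap (fun y => f y + δ * ‖y‖ ^ 2) y := fun y => by
      rw [lap_add hf hq, lap_const_mul_norm_sq]
      have := hlap y
      positivity
    obtain ⟨p, hp, hxp⟩ := exists_norm_eq_le_of_lap_pos (hf.add hq) hlap' hxR.le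
    rw [hp] at hxp
    have : 0 ≤ δ * ‖x‖ ^ 2 := by positivity
    linarith [hfR p hp]
  refine le_of_forall_pos_le_add fun η hη => ?_
  have := hδ (η / R ^ 2) (by positivity)
  rw [div_mul_cancel₀ _ (by positivity)] at this
  linarith

end Laplacian

theorem stmt11_general (d : ℕ) (hd : 3 ≤ d) (V : EuclideanSpace ℝ (Fin d) → ℝ)
    (hV0 : ∀ x, 0 ≤ V x)
    (a : ℝ) (ha : 0 < a)
    (w₁ w₂ : EuclideanSpace ℝ (Fin d) → ℝ)
    (hw₁ : ContDiff ℝ 2 w₁) (hw₂ : ContDiff ℝ 2 w₂)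
    (hweq₁ : ∀ x, lap w₁ x = a * V x * (1 + w₁ x))
    (hweq₂ : ∀ x, lap w₂ x = a * V x * (1 + w₂ x))
    (hwlim₁ : Tendsto w₁ (cocompact (EuclideanSpace ℝ (Fin d))) (nhds 0))
    (hwlim₂ : Tendsto w₂ (cocompact (EuclideanSpace ℝ (Fin d))) (nhds 0)) :
    w₁ = w₂ := by
  set u := fun x => w₁ x - w₂ x
  have hu : ContDiff ℝ 2 u := hw₁.sub hw₂
  have hlap_u : ∀ x, lap u x = a * V x * u x := fun x => by
    rw [lap_sub hw₁ hw₂, hweq₁, hweq₂]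
    ring
  have hlap_sq : ∀ x, 0 ≤ lap (fun y => u y * u y) x := fun x => by
    rw [lap_mul_self hu, hlap_u, show 2 * u x * (a * V x * u x) = 2 * a * V x * u x ^ 2 by ring]
    have := hV0 x
    positivity
  have hlim : Tendsto (fun y => u y * u y) (cocompact _) (𝓝 0) := by
    simpa using (hwlim₁.sub hwlim₂).mul (hwlim₁.sub hwlim₂)
  funext x
  have := nonpos_of_lap_nonneg (by omega) (hu.mul hu) hlap_sq hlim x
  exact sub_eq_zero.mp (mul_self_eq_zero.mp (le_antisymm this (mul_self_nonneg _)))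

theorem stmt11 (d : ℕ) (hd : 3 ≤ d) (V : EuclideanSpace ℝ (Fin d) → ℝ)
    (hV0 : ∀ x, 0 ≤ V x) (hVhold : ∃ (C r : NNReal), 0 < r ∧ HolderWith C r V)
    (hVsupp : HasCompactSupport V) (hVint : ∫ x, V x = 1)
    (a : ℝ) (ha : 0 < a)
    (w₁ w₂ : EuclideanSpace ℝ (Fin d) → ℝ)
    (hw₁ : ContDiff ℝ 2 w₁) (hw₂ : ContDiff ℝ 2 w₂)
    (hweq₁ : ∀ x, lap w₁ x = a * V x * (1 + w₁ x))
    (hweq₂ : ∀ x, lap w₂ x = a * V x * (1 + w₂ x))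
    (hwlim₁ : Tendsto w₁ (cocompact (EuclideanSpace ℝ (Fin d))) (nhds 0))
    (hwlim₂ : Tendsto w₂ (cocompact (EuclideanSpace ℝ (Fin d))) (nhds 0)) :
    w₁ = w₂ :=
  stmt11_general d hd V hV0 a ha w₁ w₂ hw₁ hw₂ hweq₁ hweq₂ hwlim₁ hwlim₂
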